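/- At every (x,y,z) ∈ 𝒜, the function f is twice differentiable and its second derivative, evaluated as a quadratic form on the tangent vector (s,t,r), equals cot α·(t−r)² + cot β·(r−s)² + cot γ·(s−t)². -/

import Mathlib

open Real

/-- Milnor's Lobachevsky function. -/
noncomputable def Lob (x : ℝ) : ℝ := -∫ t in (0:ℝ)..x, Real.log |2 * Real.sin t|

/-- Angle opposite the side of length `a` in a euclidean triangle with side
lengths `a`, `b`, `c`, given by the arccos formula (which, since `Real.arccos`
clamps, also implements the broken-triangle convention: the angle opposite a
too-long side is `π` and the other two angles are `0`). -/
noncomputable def eang (a b c : ℝ) : ℝ := Real.arccos ((b^2 + c^2 - a^2) / (2*b*c))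

/-- The open domain `𝒜` where `eˣ, e^y, e^z` satisfy the strict triangle
inequalities. -/
def Adom : Set (ℝ × ℝ × ℝ) :=
  {p | Real.exp p.1 < Real.exp p.2.1 + Real.exp p.2.2 ∧
       Real.exp p.2.1 < Real.exp p.2.2 + Real.exp p.1 ∧
       Real.exp p.2.2 < Real.exp p.1 + Real.exp p.2.1}

/-- The triangle function `f(x,y,z) = αx + βy + γz + Л(α) + Л(β) + Л(γ)`
(extended to all of `ℝ³` by the broken-triangle convention). -/
noncomputable def fTri (p : ℝ × ℝ × ℝ) : ℝ :=
  eang (Real.exp p.1) (Real.exp p.2.1) (Real.exp p.2.2) * p.1 +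
  eang (Real.exp p.2.1) (Real.exp p.2.2) (Real.exp p.1) * p.2.1 +
  eang (Real.exp p.2.2) (Real.exp p.1) (Real.exp p.2.1) * p.2.2 +
  Lob (eang (Real.exp p.1) (Real.exp p.2.1) (Real.exp p.2.2)) +
  Lob (eang (Real.exp p.2.1) (Real.exp p.2.2) (Real.exp p.1)) +
  Lob (eang (Real.exp p.2.2) (Real.exp p.1) (Real.exp p.2.1))

/-!
Write `a = eˣ, b = eʸ, c = eᶻ` and let `F` be four times the area of the triangle (Heron).
Then `cos α = (b² + c² − a²)/(2bc)` and `sin α = F/(2bc)`, and differentiating the arccos gives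
`dα = cot γ (dx − dy) + cot β (dx − dz)`, and cyclically; in particular `dα + dβ + dγ = 0`.
Since `Л'(α) = −log (2 sin α)` and by the law of sines `x − log (2 sin α) = x + y + z − log F`
is the same for all three angles, the Lobachevsky terms cancel the terms `x dα + y dβ + z dγ`,
so `df = α dx + β dy + γ dz`. Differentiating once more and inserting the formulas for
`dα, dβ, dγ` gives the quadratic form.
-/

open MeasureTheory intervalIntegral ContinuousLinearMap

theorem intervalIntegrable_log_abs_two_mul_sin (a b : ℝ) :
    IntervalIntegrable (fun t => log |2 * sin t|) volume a b := by
  simpa only [Real.norm_eq_abs] using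
    (analyticOnNhd_const.mul analyticOnNhd_sin).meromorphicOn.intervalIntegrable_log_norm

theorem hasDerivAt_Lob {θ : ℝ} (hθ : sin θ ≠ 0) : HasDerivAt Lob (-log |2 * sin θ|) θ := by
  have hcont : ContinuousAt (fun t => log |2 * sin t|) θ := by
    fun_prop (disch := positivity)
  exact (integral_hasDerivAt_right (intervalIntegrable_log_abs_two_mul_sin 0 θ)
    (by fun_prop : Measurable _).stronglyMeasurable.stronglyMeasurableAtFilter hcont).neg

/-- Heron's formula: four times the area of the triangle with side lengths `a, b, c`. -/
noncomputable def fourArea (a b c : ℝ) : ℝ :=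
  √((a + b + c) * (-a + b + c) * (a - b + c) * (a + b - c))

theorem fourArea_rotate (a b c : ℝ) : fourArea b c a = fourArea a b c := by
  unfold fourArea
  ring_nf

theorem fourArea_pos {a b c : ℝ} (h₁ : a < b + c) (h₂ : b < c + a) (h₃ : c < a + b) :
    0 < fourArea a b c := by
  have : 0 < a + b + c := by linarith
  have : 0 < -a + b + c := by linarith
  have : 0 < a - b + c := by linarith
  have : 0 < a + b - c := by linarith
  unfold fourArea
  positivity

section eang

variable {a b c : ℝ} (hb : 0 < b) (hc : 0 < c)
include hb hc

theorem sqrt_one_sub_sq_cos_eang :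
    √(1 - ((b ^ 2 + c ^ 2 - a ^ 2) / (2 * b * c)) ^ 2) = fourArea a b c / (2 * b * c) := by
  have h : 1 - ((b ^ 2 + c ^ 2 - a ^ 2) / (2 * b * c)) ^ 2 =
      (a + b + c) * (-a + b + c) * (a - b + c) * (a + b - c) / (2 * b * c) ^ 2 := by
    field_simp
    ring
  rw [h, Real.sqrt_div' _ (by positivity), Real.sqrt_sq (by positivity), fourArea]

theorem sin_eang : sin (eang a b c) = fourArea a b c / (2 * b * c) := by
  rw [eang, sin_arccos, sqrt_one_sub_sq_cos_eang hb hc]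

theorem sin_eang_pos (hF : 0 < fourArea a b c) : 0 < sin (eang a b c) := by
  rw [sin_eang hb hc]
  positivity

theorem cot_eang : cot (eang a b c) = (b ^ 2 + c ^ 2 - a ^ 2) / fourArea a b c := by
  have hcot : ∀ u : ℝ, cot (arccos u) = u / √(1 - u ^ 2) := fun u => by
    rw [cot_eq_cos_div_sin, ← inv_div, ← tan_eq_sin_div_cos, tan_arccos, inv_div]
  rw [eang, hcot, sqrt_one_sub_sq_cos_eang hb hc]
  field_simp

theorem log_abs_two_mul_sin_eang (hF : fourArea a b c ≠ 0) :
    log |2 * sin (eang a b c)| = log (fourArea a b c) - log b - log c := by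
  rw [sin_eang hb hc, abs_of_nonneg (by unfold fourArea; positivity),
    show 2 * (fourArea a b c / (2 * b * c)) = fourArea a b c / (b * c) by field_simp,
    log_div hF (by positivity), log_mul hb.ne' hc.ne']
  ring

end eang

theorem hasFDerivAt_eang_exp {E : Type*} [NormedAddCommGroup E] [NormedSpace ℝ E]
    {X Y Z : E → ℝ} {X' Y' Z' : E →L[ℝ] ℝ} {q : E}
    (hX : HasFDerivAt X X' q) (hY : HasFDerivAt Y Y' q) (hZ : HasFDerivAt Z Z' q)
    (h₁ : exp (X q) < exp (Y q) + exp (Z q)) (h₂ : exp (Y q) < exp (Z q) + exp (X q))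
    (h₃ : exp (Z q) < exp (X q) + exp (Y q)) :
    HasFDerivAt (fun w => eang (exp (X w)) (exp (Y w)) (exp (Z w)))
      (cot (eang (exp (Z q)) (exp (X q)) (exp (Y q))) • (X' - Y') +
        cot (eang (exp (Y q)) (exp (Z q)) (exp (X q))) • (X' - Z')) q := by
  set a := exp (X q)
  set b := exp (Y q)
  set c := exp (Z q)
  have ha : 0 < a := exp_pos _
  have hb : 0 < b := exp_pos _
  have hc : 0 < c := exp_pos _
  have hF : 0 < fourArea a b c := fourArea_pos h₁ h₂ h₃
  have hsin : √(1 - ((b ^ 2 + c ^ 2 - a ^ 2) / (2 * b * c)) ^ 2) ≠ 0 := by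
    rw [sqrt_one_sub_sq_cos_eang hb hc]; positivity
  have hu₁ : (b ^ 2 + c ^ 2 - a ^ 2) / (2 * b * c) ≠ -1 := by
    rintro h; simp [h] at hsin
  have hu₂ : (b ^ 2 + c ^ 2 - a ^ 2) / (2 * b * c) ≠ 1 := by
    rintro h; simp [h] at hsin
  have hnum := ((hY.exp.pow 2).add (hZ.exp.pow 2)).sub (hX.exp.pow 2)
  have hden := (hasDerivAt_inv (by positivity : 2 * b * c ≠ 0)).comp_hasFDerivAt q
    ((hY.exp.const_mul 2).mul hZ.exp)
  have harg : HasFDerivAt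
      (fun w => (exp (Y w) ^ 2 + exp (Z w) ^ 2 - exp (X w) ^ 2) / (2 * exp (Y w) * exp (Z w)))
      _ q :=
    (hnum.mul hden).congr_of_eventuallyEq (.of_forall fun w => by simp [div_eq_mul_inv])
  refine ((hasDerivAt_arccos hu₁ hu₂).comp_hasFDerivAt q harg).congr_fderiv ?_
  ext v
  simp only [Pi.add_apply, Pi.sub_apply, Pi.mul_apply, Function.comp_apply, add_apply, sub_apply,
    smul_apply, smul_eq_mul, nsmul_eq_mul]
  rw [sqrt_one_sub_sq_cos_eang hb hc, cot_eang ha hb, cot_eang hc ha, ← fourArea_rotate c a b,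
    fourArea_rotate a b c]
  field_simp
  ring

noncomputable def dx : ℝ × ℝ × ℝ →L[ℝ] ℝ := ContinuousLinearMap.fst ℝ ℝ (ℝ × ℝ)

noncomputable def dy : ℝ × ℝ × ℝ →L[ℝ] ℝ :=
  (ContinuousLinearMap.fst ℝ ℝ ℝ).comp (ContinuousLinearMap.snd ℝ ℝ (ℝ × ℝ))

noncomputable def dz : ℝ × ℝ × ℝ →L[ℝ] ℝ :=
  (ContinuousLinearMap.snd ℝ ℝ ℝ).comp (ContinuousLinearMap.snd ℝ ℝ (ℝ × ℝ))

@[simp] theorem dx_apply (v : ℝ × ℝ × ℝ) : dx v = v.1 := rfl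
@[simp] theorem dy_apply (v : ℝ × ℝ × ℝ) : dy v = v.2.1 := rfl
@[simp] theorem dz_apply (v : ℝ × ℝ × ℝ) : dz v = v.2.2 := rfl

noncomputable def angleA (p : ℝ × ℝ × ℝ) : ℝ := eang (exp p.1) (exp p.2.1) (exp p.2.2)
noncomputable def angleB (p : ℝ × ℝ × ℝ) : ℝ := eang (exp p.2.1) (exp p.2.2) (exp p.1)
noncomputable def angleC (p : ℝ × ℝ × ℝ) : ℝ := eang (exp p.2.2) (exp p.1) (exp p.2.1)

theorem isOpen_Adom : IsOpen Adom := by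
  simp only [Adom, Set.ofPred_and]
  exact (isOpen_lt (by fun_prop) (by fun_prop)).inter
    ((isOpen_lt (by fun_prop) (by fun_prop)).inter (isOpen_lt (by fun_prop) (by fun_prop)))

section angles

variable {q : ℝ × ℝ × ℝ} (hq : q ∈ Adom)
include hq

theorem hasFDerivAt_angleA :
    HasFDerivAt angleA (cot (angleC q) • (dx - dy) + cot (angleB q) • (dx - dz)) q :=
  hasFDerivAt_eang_exp dx.hasFDerivAt dy.hasFDerivAt dz.hasFDerivAt hq.1 hq.2.1 hq.2.2

theorem hasFDerivAt_angleB :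
    HasFDerivAt angleB (cot (angleA q) • (dy - dz) + cot (angleC q) • (dy - dx)) q :=
  hasFDerivAt_eang_exp dy.hasFDerivAt dz.hasFDerivAt dx.hasFDerivAt hq.2.1 hq.2.2 hq.1

theorem hasFDerivAt_angleC :
    HasFDerivAt angleC (cot (angleB q) • (dz - dx) + cot (angleA q) • (dz - dy)) q :=
  hasFDerivAt_eang_exp dz.hasFDerivAt dx.hasFDerivAt dy.hasFDerivAt hq.2.2 hq.1 hq.2.1

theorem hasFDerivAt_fTri :
    HasFDerivAt fTri (angleA q • dx + angleB q • dy + angleC q • dz) q := by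
  have ha : 0 < exp q.1 := exp_pos _
  have hb : 0 < exp q.2.1 := exp_pos _
  have hc : 0 < exp q.2.2 := exp_pos _
  have hFA : 0 < fourArea (exp q.1) (exp q.2.1) (exp q.2.2) := fourArea_pos hq.1 hq.2.1 hq.2.2
  have hFB : 0 < fourArea (exp q.2.1) (exp q.2.2) (exp q.1) := by rwa [fourArea_rotate]
  have hFC : 0 < fourArea (exp q.2.2) (exp q.1) (exp q.2.1) := by
    rwa [fourArea_rotate, fourArea_rotate]
  have hA := hasFDerivAt_angleA hq
  have hB := hasFDerivAt_angleB hq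
  have hC := hasFDerivAt_angleC hq
  have hLA := (hasDerivAt_Lob (sin_eang_pos hb hc hFA).ne').comp_hasFDerivAt q hA
  have hLB := (hasDerivAt_Lob (sin_eang_pos hc ha hFB).ne').comp_hasFDerivAt q hB
  have hLC := (hasDerivAt_Lob (sin_eang_pos ha hb hFC).ne').comp_hasFDerivAt q hC
  refine ((((((hA.mul dx.hasFDerivAt).add (hB.mul dy.hasFDerivAt)).add
    (hC.mul dz.hasFDerivAt)).add hLA).add hLB).add hLC).congr_fderiv ?_
  rw [angleA, log_abs_two_mul_sin_eang hb hc hFA.ne', angleB,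
    log_abs_two_mul_sin_eang hc ha hFB.ne', angleC, log_abs_two_mul_sin_eang ha hb hFC.ne',
    fourArea_rotate (exp q.2.1), fourArea_rotate (exp q.1)]
  simp only [dx_apply, dy_apply, dz_apply, log_exp]
  module

end angles

/-- At every point of `𝒜`, `f` is twice differentiable and its second
derivative, as a quadratic form on `(s,t,r)`, equals
`cot α·(t−r)² + cot β·(r−s)² + cot γ·(s−t)²`. -/
theorem fTri_second_derivative (p : ℝ × ℝ × ℝ) (hp : p ∈ Adom) :
    ∃ f' : ℝ × ℝ × ℝ → (ℝ × ℝ × ℝ →L[ℝ] ℝ),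
    ∃ f'' : ℝ × ℝ × ℝ →L[ℝ] (ℝ × ℝ × ℝ →L[ℝ] ℝ),
      (∀ᶠ q in nhds p, HasFDerivAt fTri (f' q) q) ∧
      HasFDerivAt f' f'' p ∧
      ∀ s t r : ℝ, f'' (s, t, r) (s, t, r) =
        Real.cot (eang (Real.exp p.1) (Real.exp p.2.1) (Real.exp p.2.2)) * (t - r)^2 +
        Real.cot (eang (Real.exp p.2.1) (Real.exp p.2.2) (Real.exp p.1)) * (r - s)^2 +
        Real.cot (eang (Real.exp p.2.2) (Real.exp p.1) (Real.exp p.2.1)) * (s - t)^2 := by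
  refine ⟨fun q => angleA q • dx + angleB q • dy + angleC q • dz, _,
    (isOpen_Adom.eventually_mem hp).mono fun q hq => hasFDerivAt_fTri hq,
    (((hasFDerivAt_angleA hp).smul_const dx).add ((hasFDerivAt_angleB hp).smul_const dy)).add
      ((hasFDerivAt_angleC hp).smul_const dz), fun s t r => ?_⟩
  simp only [angleA, angleB, angleC, add_apply, smulRight_apply, smul_apply, sub_apply, dx_apply,
    dy_apply, dz_apply, smul_eq_mul]
  ring
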